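/- Let $\mathcal{R}_\Theta := \mathbb{F}_2[X_1,X_2]/(X_1^2X_2 + X_1X_2^2,\; X_1^2 + X_2^2 + X_1X_2)$ and consider the $\mathbb{F}_2$-linear maps $d^0 : \mathcal{R}_\Theta \to \mathcal{R}_\Theta \oplus \mathcal{R}_\Theta$, $d^0(r) = (X_1 r,\, X_2 r)$, and $d^1 : \mathcal{R}_\Theta \oplus \mathcal{R}_\Theta \to \mathcal{R}_\Theta$, $d^1(a,b) = X_2 a + X_1 b$. Then $d^1 \circ d^0 = 0$ and $\dim_{\mathbb{F}_2} \ker d^0 = 1$, $\dim_{\mathbb{F}_2} (\ker d^1/\operatorname{im} d^0) = 2$, $\dim_{\mathbb{F}_2} (\mathcal{R}_\Theta/\operatorname{im} d^1) = 1$; in particular the total homology has $\mathbb{F}_2$-dimension 4. -/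

import Mathlib

open MvPolynomial

noncomputable section

/-- The defining ideal of the mod-2 graph ring of the planar theta graph. -/
abbrev thetaIdealF : Ideal (MvPolynomial (Fin 2) (ZMod 2)) :=
  Ideal.span {X 0 ^ 2 * X 1 + X 0 * X 1 ^ 2, X 0 ^ 2 + X 1 ^ 2 + X 0 * X 1}

/-- The graph ring `𝓡_Θ = 𝔽₂[X₁,X₂]/(X₁²X₂ + X₁X₂², X₁² + X₂² + X₁X₂)` of the
planar theta graph over the two-element field. -/
abbrev RThetaF := MvPolynomial (Fin 2) (ZMod 2) ⧸ thetaIdealF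

/-- The residue class of `X₁` in `𝓡_Θ`. -/
abbrev RThetaF.x1 : RThetaF := Ideal.Quotient.mk thetaIdealF (X 0)

/-- The residue class of `X₂` in `𝓡_Θ`. -/
abbrev RThetaF.x2 : RThetaF := Ideal.Quotient.mk thetaIdealF (X 1)

/-- The first Koszul differential `d⁰(r) = (X₁ r, X₂ r)`. -/
def kosZeroF : RThetaF →ₗ[ZMod 2] RThetaF × RThetaF :=
  (LinearMap.mulLeft (ZMod 2) RThetaF.x1).prod (LinearMap.mulLeft (ZMod 2) RThetaF.x2)

/-- The second Koszul differential `d¹(a, b) = X₂ a + X₁ b`. -/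
def kosOneF : RThetaF × RThetaF →ₗ[ZMod 2] RThetaF :=
  (LinearMap.mulLeft (ZMod 2) RThetaF.x2).comp (LinearMap.fst (ZMod 2) RThetaF RThetaF) +
    (LinearMap.mulLeft (ZMod 2) RThetaF.x1).comp (LinearMap.snd (ZMod 2) RThetaF RThetaF)

/-!
The six monomials `1, x₁, x₂, x₁², x₁x₂, x₁²x₂` form an `𝔽₂`-basis of `𝓡_Θ`. They span because
their span contains `1` and is stable under multiplication by `x₁` and `x₂` (this is where the two
relations are used: `x₁³ = 0`, `x₂² = x₁² + x₁x₂`, `x₁x₂² = x₁²x₂`, `x₁²x₂² = 0`). They are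
independent because the matrices of these multiplications commute and satisfy the relations, so
`𝓡_Θ` acts on `𝔽₂⁶`, and acting on the first basis vector recovers the coordinates.

In this basis `ker d⁰` is the socle, spanned by `x₁²x₂`, and `im d¹ = (x₁, x₂)` is the kernel of
the augmentation `𝓡_Θ → 𝔽₂`. The Euler characteristic `6 - 12 + 6` of the complex vanishes, hence
`dim H₁ = dim H₀ + dim H₂ = 2`.
-/

open RThetaF Matrix
open scoped IsMulCommutative

lemma two_eq_zero_of_zmod_two {A : Type*} [Ring A] [Algebra (ZMod 2) A] : (2 : A) = 0 := by
  rw [← map_ofNat (algebraMap (ZMod 2) A) 2]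
  exact (algebraMap (ZMod 2) A).map_zero

theorem Submodule.eq_top_of_one_mem_of_mul_mem {K A : Type*} [CommSemiring K] [Semiring A]
    [Algebra K A] {s : Set A} (hs : Algebra.adjoin K s = ⊤) {S : Submodule K A} (h1 : 1 ∈ S)
    (hmul : ∀ x ∈ s, ∀ y ∈ S, x * y ∈ S) : S = ⊤ := by
  have hadjoin : ∀ a ∈ Algebra.adjoin K s, ∀ y ∈ S, a * y ∈ S := by
    intro a ha
    induction ha using Algebra.adjoin_induction with
    | mem x hx => exact hmul x hx
    | algebraMap r => intro y hy; rw [← Algebra.smul_def]; exact S.smul_mem r hy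
    | add x z _ _ hx hz => intro y hy; rw [add_mul]; exact S.add_mem (hx y hy) (hz y hy)
    | mul x z _ _ hx hz => intro y hy; rw [mul_assoc]; exact hx _ (hz y hy)
  exact eq_top_iff'.2 fun a => by simpa using hadjoin a (hs ▸ Algebra.mem_top) 1 h1

theorem LinearMap.finrank_add_finrank_homology_add_finrank {K U V W : Type*} [Field K]
    [AddCommGroup U] [Module K U] [AddCommGroup V] [Module K V] [AddCommGroup W] [Module K W]
    [FiniteDimensional K U] [FiniteDimensional K V] [FiniteDimensional K W]
    (f : U →ₗ[K] V) (g : V →ₗ[K] W) (hgf : g ∘ₗ f = 0) :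
    Module.finrank K U + Module.finrank K (ker g ⧸ (range f).comap (ker g).subtype) +
        Module.finrank K W =
      Module.finrank K (ker f) + Module.finrank K V + Module.finrank K (W ⧸ range g) := by
  have hU := f.finrank_range_add_finrank_ker
  have hV := g.finrank_range_add_finrank_ker
  have hW := (range g).finrank_quotient_add_finrank
  have hH := ((range f).comap (ker g).subtype).finrank_quotient_add_finrank
  have hB := (Submodule.comapSubtypeEquivOfLe (range_le_ker_iff.2 hgf)).finrank_eq
  omega

lemma cubic_relation : (x1 ^ 2 * x2 + x1 * x2 ^ 2 : RThetaF) = 0 := by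
  have h : Ideal.Quotient.mk thetaIdealF (X 0 ^ 2 * X 1 + X 0 * X 1 ^ 2) = 0 :=
    Ideal.Quotient.eq_zero_iff_mem.mpr (Ideal.subset_span (Set.mem_insert _ _))
  simpa using h

lemma quadratic_relation : (x1 ^ 2 + x2 ^ 2 + x1 * x2 : RThetaF) = 0 := by
  have h : Ideal.Quotient.mk thetaIdealF (X 0 ^ 2 + X 1 ^ 2 + X 0 * X 1) = 0 :=
    Ideal.Quotient.eq_zero_iff_mem.mpr (Ideal.subset_span (Set.mem_insert_of_mem _ rfl))
  simpa using h

lemma adjoin_x1_x2 : Algebra.adjoin (ZMod 2) {x1, x2} = (⊤ : Subalgebra (ZMod 2) RThetaF) := by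
  have h : ({x1, x2} : Set RThetaF) = Ideal.Quotient.mkₐ (ZMod 2) thetaIdealF '' Set.range X := by
    ext r
    simp [Fin.exists_fin_two, eq_comm]
  rw [h, Algebra.adjoin_image, MvPolynomial.adjoin_range_X, Algebra.map_top,
    AlgHom.range_eq_top]
  exact Ideal.Quotient.mkₐ_surjective _ _

lemma kosZeroF_apply (r : RThetaF) : kosZeroF r = (x1 * r, x2 * r) := rfl

lemma kosOneF_apply (a b : RThetaF) : kosOneF (a, b) = x2 * a + x1 * b := rfl

lemma kosOneF_comp_kosZeroF : kosOneF ∘ₗ kosZeroF = 0 := by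
  refine LinearMap.ext fun r => ?_
  simp only [LinearMap.comp_apply, kosZeroF_apply, kosOneF_apply, LinearMap.zero_apply]
  linear_combination x1 * x2 * r * two_eq_zero_of_zmod_two (A := RThetaF)

def thetaMonomial : Fin 6 → RThetaF := ![1, x1, x2, x1 ^ 2, x1 * x2, x1 ^ 2 * x2]

def ofCoords : (Fin 6 → ZMod 2) →ₗ[ZMod 2] RThetaF :=
  Fintype.linearCombination (ZMod 2) thetaMonomial

-- The `ZMod 2`-module structure of the quotient is `Submodule.Quotient.module'`, on which
-- `Algebra.smul_def` does not fire as a rewrite rule.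
lemma smul_eq_algebraMap_mul (c : ZMod 2) (r : RThetaF) :
    c • r = algebraMap (ZMod 2) RThetaF c * r :=
  Algebra.smul_def c r

-- Column `j` of `mulXᵢMatrix` holds the coordinates of `xᵢ * thetaMonomial j`.
def mulX1Matrix : Matrix (Fin 6) (Fin 6) (ZMod 2) :=
  !![0, 0, 0, 0, 0, 0;
     1, 0, 0, 0, 0, 0;
     0, 0, 0, 0, 0, 0;
     0, 1, 0, 0, 0, 0;
     0, 0, 1, 0, 0, 0;
     0, 0, 0, 0, 1, 0]

def mulX2Matrix : Matrix (Fin 6) (Fin 6) (ZMod 2) :=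
  !![0, 0, 0, 0, 0, 0;
     0, 0, 0, 0, 0, 0;
     1, 0, 0, 0, 0, 0;
     0, 0, 1, 0, 0, 0;
     0, 1, 1, 0, 0, 0;
     0, 0, 0, 1, 1, 0]

lemma mulX1Matrix_mulVec :
    ∀ a : Fin 6 → ZMod 2, mulX1Matrix *ᵥ a = ![0, a 0, 0, a 1, a 2, a 4] := by
  decide

lemma mulX2Matrix_mulVec :
    ∀ a : Fin 6 → ZMod 2, mulX2Matrix *ᵥ a = ![0, 0, a 0, a 2, a 1 + a 2, a 3 + a 4] := by
  decide

lemma ofCoords_apply (a : Fin 6 → ZMod 2) : ofCoords a =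
    a 0 • 1 + a 1 • x1 + a 2 • x2 + a 3 • x1 ^ 2 + a 4 • (x1 * x2) + a 5 • (x1 ^ 2 * x2) := by
  simp [ofCoords, Fintype.linearCombination_apply, Fin.sum_univ_six, thetaMonomial]

lemma x1_mul_ofCoords (a : Fin 6 → ZMod 2) : x1 * ofCoords a = ofCoords (mulX1Matrix *ᵥ a) := by
  simp only [ofCoords_apply, smul_eq_algebraMap_mul, mulX1Matrix_mulVec, cons_val, map_zero]
  set c := algebraMap (ZMod 2) RThetaF
  linear_combination (c (a 3) + c (a 5) * x2) * (x1 * quadratic_relation - cubic_relation)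

lemma x2_mul_ofCoords (a : Fin 6 → ZMod 2) : x2 * ofCoords a = ofCoords (mulX2Matrix *ᵥ a) := by
  simp only [ofCoords_apply, smul_eq_algebraMap_mul, mulX2Matrix_mulVec, cons_val, map_zero,
    map_add]
  set c := algebraMap (ZMod 2) RThetaF
  linear_combination (c (a 2) - c (a 5) * x1 * x2) * quadratic_relation +
    (c (a 4) + c (a 5) * (x1 + x2)) * cubic_relation -
    (c (a 2) * (x1 ^ 2 + x1 * x2) + c (a 4) * x1 ^ 2 * x2) * two_eq_zero_of_zmod_two (A := RThetaF)

lemma ofCoords_surjective : Function.Surjective ofCoords := by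
  rw [← LinearMap.range_eq_top]
  refine Submodule.eq_top_of_one_mem_of_mul_mem adjoin_x1_x2 ⟨Pi.single 0 1, ?_⟩ ?_
  · simp [ofCoords, thetaMonomial]
  · rintro x (rfl | rfl) _ ⟨a, rfl⟩
    exacts [⟨_, (x1_mul_ofCoords a).symm⟩, ⟨_, (x2_mul_ofCoords a).symm⟩]

abbrev mulMatrixAlgebra : Subalgebra (ZMod 2) (Matrix (Fin 6) (Fin 6) (ZMod 2)) :=
  Algebra.adjoin (ZMod 2) {mulX1Matrix, mulX2Matrix}

instance : IsMulCommutative mulMatrixAlgebra :=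
  Algebra.isMulCommutative_adjoin _ (by
    have h : mulX1Matrix * mulX2Matrix = mulX2Matrix * mulX1Matrix := by decide
    rintro a (rfl | rfl) b (rfl | rfl) <;> first | rfl | exact h | exact h.symm)

def regularRepPoly : MvPolynomial (Fin 2) (ZMod 2) →ₐ[ZMod 2] mulMatrixAlgebra :=
  aeval ![⟨mulX1Matrix, Algebra.subset_adjoin (by simp)⟩,
    ⟨mulX2Matrix, Algebra.subset_adjoin (by simp)⟩]

lemma coe_regularRepPoly_X0 :
    (regularRepPoly (X 0) : Matrix (Fin 6) (Fin 6) (ZMod 2)) = mulX1Matrix := by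
  simp [regularRepPoly]

lemma coe_regularRepPoly_X1 :
    (regularRepPoly (X 1) : Matrix (Fin 6) (Fin 6) (ZMod 2)) = mulX2Matrix := by
  simp [regularRepPoly]

lemma thetaIdealF_le_ker_regularRepPoly : thetaIdealF ≤ RingHom.ker regularRepPoly := by
  rw [Ideal.span_le]
  rintro q (rfl | rfl) <;> apply Subtype.ext <;>
    simp only [map_add, map_mul, map_pow, Subalgebra.coe_add, Subalgebra.coe_mul,
      Subalgebra.coe_pow, coe_regularRepPoly_X0, coe_regularRepPoly_X1] <;>
    decide

def regularRep : RThetaF →ₐ[ZMod 2] mulMatrixAlgebra :=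
  Ideal.Quotient.liftₐ thetaIdealF regularRepPoly fun _ hp => thetaIdealF_le_ker_regularRepPoly hp

lemma coe_regularRep_ofCoords (a : Fin 6 → ZMod 2) :
    (regularRep (ofCoords a) : Matrix (Fin 6) (Fin 6) (ZMod 2)) =
      a 0 • 1 + a 1 • mulX1Matrix + a 2 • mulX2Matrix + a 3 • mulX1Matrix ^ 2 +
        a 4 • (mulX1Matrix * mulX2Matrix) + a 5 • (mulX1Matrix ^ 2 * mulX2Matrix) := by
  have hx1 : (regularRep x1 : Matrix (Fin 6) (Fin 6) (ZMod 2)) = mulX1Matrix :=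
    coe_regularRepPoly_X0
  have hx2 : (regularRep x2 : Matrix (Fin 6) (Fin 6) (ZMod 2)) = mulX2Matrix :=
    coe_regularRepPoly_X1
  simp [ofCoords_apply, hx1, hx2]

lemma regularRep_ofCoords_mulVec (a : Fin 6 → ZMod 2) :
    (regularRep (ofCoords a) : Matrix (Fin 6) (Fin 6) (ZMod 2)) *ᵥ Pi.single 0 1 = a := by
  rw [coe_regularRep_ofCoords]
  revert a
  decide

lemma ofCoords_injective : Function.Injective ofCoords := fun a b h => by
  rw [← regularRep_ofCoords_mulVec a, h, regularRep_ofCoords_mulVec]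

def coordEquiv : (Fin 6 → ZMod 2) ≃ₗ[ZMod 2] RThetaF :=
  LinearEquiv.ofBijective ofCoords ⟨ofCoords_injective, ofCoords_surjective⟩

instance : Module.Finite (ZMod 2) RThetaF := Module.Finite.equiv coordEquiv

lemma finrank_RThetaF : Module.finrank (ZMod 2) RThetaF = 6 := by
  rw [← coordEquiv.finrank_eq]
  simp

lemma ofCoords_single_five : ofCoords (Pi.single 5 1) = x1 ^ 2 * x2 := by
  simp [ofCoords, thetaMonomial]

lemma ker_kosZeroF : LinearMap.ker kosZeroF = (ZMod 2) ∙ (x1 ^ 2 * x2) := by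
  ext r
  obtain ⟨a, rfl⟩ := ofCoords_surjective r
  rw [LinearMap.mem_ker, Submodule.mem_span_singleton, ← ofCoords_single_five]
  simp only [kosZeroF_apply, x1_mul_ofCoords, x2_mul_ofCoords, Prod.mk_eq_zero, ← map_smul,
    ← map_zero ofCoords, ofCoords_injective.eq_iff]
  revert a
  decide

lemma finrank_ker_kosZeroF : Module.finrank (ZMod 2) (LinearMap.ker kosZeroF) = 1 := by
  rw [ker_kosZeroF, finrank_span_singleton]
  rw [← ofCoords_single_five, ← map_zero ofCoords, ofCoords_injective.ne_iff]
  decide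

def augmentation : RThetaF →ₐ[ZMod 2] ZMod 2 :=
  Ideal.Quotient.liftₐ thetaIdealF (aeval 0) fun _ hp => by
    refine RingHom.mem_ker.1 ((Ideal.span_le (I := RingHom.ker (aeval 0))).2 ?_ hp)
    rintro q (rfl | rfl) <;> simp

lemma augmentation_mk (p : MvPolynomial (Fin 2) (ZMod 2)) :
    augmentation (Ideal.Quotient.mk thetaIdealF p) = aeval 0 p := rfl

lemma sub_augmentation_mem_range_kosOneF (r : RThetaF) :
    r - algebraMap (ZMod 2) RThetaF (augmentation r) ∈ LinearMap.range kosOneF := by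
  obtain ⟨p, rfl⟩ := Ideal.Quotient.mk_surjective r
  induction p using MvPolynomial.induction_on with
  | C c =>
    rw [← MvPolynomial.algebraMap_eq, Ideal.Quotient.mk_algebraMap, AlgHom.commutes,
      Algebra.algebraMap_self, RingHom.id_apply, sub_self]
    exact zero_mem _
  | add p q hp hq =>
    have h : ∀ x y : RThetaF, x + y - algebraMap (ZMod 2) RThetaF (augmentation (x + y)) =
        (x - algebraMap (ZMod 2) RThetaF (augmentation x)) +
          (y - algebraMap (ZMod 2) RThetaF (augmentation y)) := fun x y => by
      rw [map_add, map_add]; abel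
    rw [map_add, h]
    exact add_mem hp hq
  | mul_X p i _ =>
    have hmem : Ideal.Quotient.mk thetaIdealF (p * X i) ∈ LinearMap.range kosOneF := by
      fin_cases i
      · exact ⟨(0, Ideal.Quotient.mk thetaIdealF p), by
          rw [kosOneF_apply, mul_zero, zero_add, map_mul, mul_comm]; rfl⟩
      · exact ⟨(Ideal.Quotient.mk thetaIdealF p, 0), by
          rw [kosOneF_apply, mul_zero, add_zero, map_mul, mul_comm]; rfl⟩
    rwa [augmentation_mk, map_mul (aeval 0), aeval_X, Pi.zero_apply, mul_zero, map_zero,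
      sub_zero]

lemma range_kosOneF : LinearMap.range kosOneF = LinearMap.ker augmentation.toLinearMap := by
  refine le_antisymm ?_ fun r hr => ?_
  · rintro _ ⟨⟨a, b⟩, rfl⟩
    simp [kosOneF_apply, augmentation_mk]
  · have h := sub_augmentation_mem_range_kosOneF r
    rwa [show augmentation r = 0 from hr, map_zero, sub_zero] at h

lemma finrank_cokernel_kosOneF :
    Module.finrank (ZMod 2) (RThetaF ⧸ LinearMap.range kosOneF) = 1 := by
  rw [range_kosOneF, (augmentation.toLinearMap.quotKerEquivOfSurjective
    fun c => ⟨algebraMap (ZMod 2) RThetaF c, augmentation.commutes c⟩).finrank_eq,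
    Module.finrank_self]

/-- The Koszul complex `𝓡_Θ → 𝓡_Θ ⊕ 𝓡_Θ → 𝓡_Θ` of `(X₁, X₂)` over `𝔽₂` is a complex
(`d¹ ∘ d⁰ = 0`) whose homology groups `ker d⁰`, `ker d¹ / im d⁰` and `𝓡_Θ / im d¹`
have `𝔽₂`-dimensions `1`, `2` and `1` respectively; in particular the total homology
has `𝔽₂`-dimension `4`. -/
theorem RThetaF_koszul_homology_dims :
    kosOneF.comp kosZeroF = 0 ∧
    Module.finrank (ZMod 2) ↥(LinearMap.ker kosZeroF) = 1 ∧
    Module.finrank (ZMod 2)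
      (↥(LinearMap.ker kosOneF) ⧸
        Submodule.comap (LinearMap.ker kosOneF).subtype (LinearMap.range kosZeroF)) = 2 ∧
    Module.finrank (ZMod 2) (RThetaF ⧸ LinearMap.range kosOneF) = 1 ∧
    Module.finrank (ZMod 2)
      (↥(LinearMap.ker kosZeroF) ×
        (↥(LinearMap.ker kosOneF) ⧸
          Submodule.comap (LinearMap.ker kosOneF).subtype (LinearMap.range kosZeroF)) ×
        (RThetaF ⧸ LinearMap.range kosOneF)) = 4 := by
  have euler := kosZeroF.finrank_add_finrank_homology_add_finrank kosOneF kosOneF_comp_kosZeroF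
  rw [Module.finrank_prod, finrank_RThetaF, finrank_ker_kosZeroF, finrank_cokernel_kosOneF]
    at euler
  have finrank_homology : Module.finrank (ZMod 2)
      (↥(LinearMap.ker kosOneF) ⧸
        Submodule.comap (LinearMap.ker kosOneF).subtype (LinearMap.range kosZeroF)) = 2 := by
    omega
  refine ⟨kosOneF_comp_kosZeroF, finrank_ker_kosZeroF, finrank_homology,
    finrank_cokernel_kosOneF, ?_⟩
  rw [Module.finrank_prod, Module.finrank_prod, finrank_ker_kosZeroF, finrank_homology,
    finrank_cokernel_kosOneF]

end
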